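/- arXiv:2405.05503 — 4 statements merged into one kernel-verified Lean document; each statement's English description precedes it below -/
import Mathlib

section
/- Let p ≥ 1 be an integer, α, γ_g, γ_s > 0, ρ ∈ (0,1), Σ ∈ ℝ^{p×p} symmetric positive definite, and A > 0. Define the GS density f_M(n) = ρ·k₁·exp(−‖n‖²/(4γ_g²)) + (1−ρ)·k₂·(1 + nᵀΣ⁻¹n/α)^{−(α+p)/2}, where k₁ = (2√π γ_g)^{−p} and k₂ = Γ((α+p)/2)/(Γ(α/2)(απ)^{p/2}√(det Σ)). Let Ω = {n : f_M(n + 2A·e_p) > f_M(n)}, Ω_A = {n : e_pᵀn < −pA}, and Ω_B = {n : e_pᵀΣ⁻¹n < −A·e_pᵀΣ⁻¹e_p}. Then Ω_A ∩ Ω_B ⊆ Ω ⊆ Ω_A ∪ Ω_B. -/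
/-!
Both components of `f_M` are strictly decreasing functions of a quadratic form `nᵀ M n`
(`M = 1` for the Gaussian, `M = Σ⁻¹` for the Student-t), and shifting by `w = 2A·e_p` lowers
`nᵀ M n` exactly when `2 wᵀ M n + wᵀ M w < 0`, i.e. when `n` lies in `Ω_A`, resp. `Ω_B`.
A positive combination of two functions increases if both do, and can only increase if one does.
-/

open Matrix Real

section PositiveCombination

variable {X : Type*} (T : X → X) (g s : X → ℝ) {a b : ℝ}

theorem inter_subset_setOf_lt_add (ha : 0 < a) (hb : 0 < b) :
    {x | g x < g (T x)} ∩ {x | s x < s (T x)}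
      ⊆ {x | a * g x + b * s x < a * g (T x) + b * s (T x)} :=
  fun _ ⟨hg, hs⟩ => add_lt_add (mul_lt_mul_of_pos_left hg ha) (mul_lt_mul_of_pos_left hs hb)

theorem setOf_lt_add_subset_union (ha : 0 ≤ a) (hb : 0 ≤ b) :
    {x | a * g x + b * s x < a * g (T x) + b * s (T x)}
      ⊆ {x | g x < g (T x)} ∪ {x | s x < s (T x)} := by
  intro x hx
  by_contra! h
  simp only [Set.mem_union, Set.mem_ofPred_eq, not_or, not_lt] at h
  exact (add_le_add (mul_le_mul_of_nonneg_left h.1 ha)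
    (mul_le_mul_of_nonneg_left h.2 hb)).not_gt hx

end PositiveCombination

section QuadraticForm

variable {ι : Type*} [Fintype ι] {M : Matrix ι ι ℝ}

theorem dotProduct_mulVec_add_self (hM : M.IsSymm) (n w : ι → ℝ) :
    (n + w) ⬝ᵥ (M *ᵥ (n + w))
      = n ⬝ᵥ (M *ᵥ n) + 2 * (w ⬝ᵥ (M *ᵥ n)) + w ⬝ᵥ (M *ᵥ w) := by
  have hcross : n ⬝ᵥ (M *ᵥ w) = w ⬝ᵥ (M *ᵥ n) := by
    rw [dotProduct_mulVec, ← mulVec_transpose, hM.eq, dotProduct_comm]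
  rw [mulVec_add, dotProduct_add, add_dotProduct, add_dotProduct, hcross]
  ring

theorem dotProduct_mulVec_add_two_smul_lt_iff (hM : M.IsSymm) {a : ℝ} (ha : 0 < a)
    (n u : ι → ℝ) :
    (n + (2 * a) • u) ⬝ᵥ (M *ᵥ (n + (2 * a) • u)) < n ⬝ᵥ (M *ᵥ n)
      ↔ u ⬝ᵥ (M *ᵥ n) < -(a * (u ⬝ᵥ (M *ᵥ u))) := by
  rw [dotProduct_mulVec_add_self hM, mulVec_smul, smul_dotProduct, dotProduct_smul,
    smul_dotProduct, smul_eq_mul, smul_eq_mul, smul_eq_mul]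
  constructor <;> intro h <;> nlinarith

end QuadraticForm

theorem one_add_div_rpow_lt_iff_of_neg {t t' α r : ℝ} (ht : 0 ≤ t) (ht' : 0 ≤ t')
    (hα : 0 < α) (hr : r < 0) : (1 + t / α) ^ r < (1 + t' / α) ^ r ↔ t' < t := by
  rw [rpow_lt_rpow_iff_of_neg (by positivity) (by positivity) hr, add_lt_add_iff_left,
    div_lt_div_iff_of_pos_right hα]

theorem exp_neg_div_lt_exp_neg_div_iff {t t' c : ℝ} (hc : 0 < c) :
    exp (-t / c) < exp (-t' / c) ↔ t' < t := by
  rw [exp_lt_exp, div_lt_div_iff_of_pos_right hc, neg_lt_neg_iff]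

theorem gaussian_add_two_smul_lt_iff {ι : Type*} [Fintype ι] {c a : ℝ} (hc : 0 < c)
    (ha : 0 < a) (n u : ι → ℝ) :
    exp (-(∑ i, n i ^ 2) / c) < exp (-(∑ i, (n + (2 * a) • u) i ^ 2) / c)
      ↔ u ⬝ᵥ n < -(a * (u ⬝ᵥ u)) := by
  classical
  have hsq (m : ι → ℝ) : ∑ i, m i ^ 2 = m ⬝ᵥ (1 *ᵥ m) := by
    simp only [one_mulVec, dotProduct, sq]
  rw [exp_neg_div_lt_exp_neg_div_iff hc, hsq, hsq,
    dotProduct_mulVec_add_two_smul_lt_iff isSymm_one ha, one_mulVec, one_mulVec]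

theorem student_add_two_smul_lt_iff {ι : Type*} [Fintype ι] {M : Matrix ι ι ℝ}
    (hM : M.PosSemidef) {α r a : ℝ} (hα : 0 < α) (hr : r < 0) (ha : 0 < a) (n u : ι → ℝ) :
    (1 + n ⬝ᵥ (M *ᵥ n) / α) ^ r
        < (1 + (n + (2 * a) • u) ⬝ᵥ (M *ᵥ (n + (2 * a) • u)) / α) ^ r
      ↔ u ⬝ᵥ (M *ᵥ n) < -(a * (u ⬝ᵥ (M *ᵥ u))) := by
  have hnonneg (m : ι → ℝ) : 0 ≤ m ⬝ᵥ (M *ᵥ m) := by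
    simpa using hM.dotProduct_mulVec_nonneg m
  rw [one_add_div_rpow_lt_iff_of_neg (hnonneg _) (hnonneg _) hα hr]
  exact dotProduct_mulVec_add_two_smul_lt_iff hM.isHermitian ha n u

theorem error_region_sandwich_general (p : ℕ) (α γg ρ A : ℝ)
    (hα : 0 < α) (hγg : 0 < γg) (hρ : ρ ∈ Set.Ioo (0 : ℝ) 1) (hA : 0 < A)
    (Cov : Matrix (Fin p) (Fin p) ℝ) (hCov : Cov.PosDef)
    (f : (Fin p → ℝ) → ℝ)
    (hf : ∀ n, f n =
        ρ * ((2 * Real.sqrt π * γg) ^ p)⁻¹ * Real.exp (-(∑ i, n i ^ 2) / (4 * γg ^ 2))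
        + (1 - ρ) *
            (Real.Gamma ((α + p) / 2) /
              (Real.Gamma (α / 2) * (α * π) ^ ((p : ℝ) / 2) * Real.sqrt Cov.det)) *
            (1 + (n ⬝ᵥ (Cov⁻¹ *ᵥ n)) / α) ^ (-(α + (p : ℝ)) / 2)) :
    ({n : Fin p → ℝ | (fun _ => (1 : ℝ)) ⬝ᵥ n < -((p : ℝ) * A)} ∩
        {n : Fin p → ℝ | (fun _ => (1 : ℝ)) ⬝ᵥ (Cov⁻¹ *ᵥ n)
            < -(A * ((fun _ => (1 : ℝ)) ⬝ᵥ (Cov⁻¹ *ᵥ (fun _ => (1 : ℝ)))))}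
        ⊆ {n : Fin p → ℝ | f (n + fun _ => 2 * A) > f n})
    ∧ ({n : Fin p → ℝ | f (n + fun _ => 2 * A) > f n}
        ⊆ {n : Fin p → ℝ | (fun _ => (1 : ℝ)) ⬝ᵥ n < -((p : ℝ) * A)} ∪
          {n : Fin p → ℝ | (fun _ => (1 : ℝ)) ⬝ᵥ (Cov⁻¹ *ᵥ n)
              < -(A * ((fun _ => (1 : ℝ)) ⬝ᵥ (Cov⁻¹ *ᵥ (fun _ => (1 : ℝ)))))}) := by
  set G : (Fin p → ℝ) → ℝ := fun n => exp (-(∑ i, n i ^ 2) / (4 * γg ^ 2))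
  set S : (Fin p → ℝ) → ℝ := fun n =>
    (1 + (n ⬝ᵥ (Cov⁻¹ *ᵥ n)) / α) ^ (-(α + (p : ℝ)) / 2)
  have hshift (n : Fin p → ℝ) : (n + fun _ => 2 * A) = n + (2 * A) • 1 := by
    ext; simp
  have hΩA : {n | G n < G (n + fun _ => 2 * A)} = {n | (fun _ => 1) ⬝ᵥ n < -(p * A)} := by
    ext n
    have key := gaussian_add_two_smul_lt_iff (c := 4 * γg ^ 2) (by positivity) hA n 1
    rw [one_dotProduct_one, Fintype.card_fin, mul_comm A, ← hshift] at key
    exact key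
  have hΩB : {n | S n < S (n + fun _ => 2 * A)} = {n | (fun _ => 1) ⬝ᵥ (Cov⁻¹ *ᵥ n)
      < -(A * ((fun _ => (1 : ℝ)) ⬝ᵥ (Cov⁻¹ *ᵥ (fun _ => (1 : ℝ)))))} := by
    ext n
    rw [Set.mem_ofPred_eq, Set.mem_ofPred_eq, hshift]
    exact student_add_two_smul_lt_iff hCov.inv.posSemidef hα
      (by have := p.cast_nonneg (α := ℝ); linarith) hA n 1
  obtain ⟨c₁, c₂, hc₁, hc₂, rfl⟩ :
      ∃ c₁ c₂ : ℝ, 0 < c₁ ∧ 0 < c₂ ∧ f = fun n => c₁ * G n + c₂ * S n :=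
    ⟨_, _, by have := hρ.1; positivity,
      mul_pos (sub_pos.2 hρ.2) (by have := hCov.det_pos; positivity), funext hf⟩
  rw [← hΩA, ← hΩB]
  exact ⟨inter_subset_setOf_lt_add _ G S hc₁ hc₂,
    setOf_lt_add_subset_union _ G S hc₁.le hc₂.le⟩

/-- Sandwich inclusion for the ML BPSK error region under the GS bursty mixed-noise density:
with `Ω = {n : f_M(n + 2A·e_p) > f_M(n)}`, `Ω_A = {n : e_pᵀn < −pA}` and
`Ω_B = {n : e_pᵀΣ⁻¹n < −A·e_pᵀΣ⁻¹e_p}`, one has `Ω_A ∩ Ω_B ⊆ Ω ⊆ Ω_A ∪ Ω_B`. -/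
theorem error_region_sandwich (p : ℕ) (hp : 1 ≤ p) (α γg γs ρ A : ℝ)
    (hα : 0 < α) (hγg : 0 < γg) (hγs : 0 < γs) (hρ : ρ ∈ Set.Ioo (0 : ℝ) 1) (hA : 0 < A)
    (Cov : Matrix (Fin p) (Fin p) ℝ) (hCov : Cov.PosDef)
    (f : (Fin p → ℝ) → ℝ)
    (hf : ∀ n, f n =
        ρ * ((2 * Real.sqrt π * γg) ^ p)⁻¹ * Real.exp (-(∑ i, n i ^ 2) / (4 * γg ^ 2))
        + (1 - ρ) *
            (Real.Gamma ((α + p) / 2) /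
              (Real.Gamma (α / 2) * (α * π) ^ ((p : ℝ) / 2) * Real.sqrt Cov.det)) *
            (1 + (n ⬝ᵥ (Cov⁻¹ *ᵥ n)) / α) ^ (-(α + (p : ℝ)) / 2)) :
    ({n : Fin p → ℝ | (fun _ => (1 : ℝ)) ⬝ᵥ n < -((p : ℝ) * A)} ∩
        {n : Fin p → ℝ | (fun _ => (1 : ℝ)) ⬝ᵥ (Cov⁻¹ *ᵥ n)
            < -(A * ((fun _ => (1 : ℝ)) ⬝ᵥ (Cov⁻¹ *ᵥ (fun _ => (1 : ℝ)))))}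
        ⊆ {n : Fin p → ℝ | f (n + fun _ => 2 * A) > f n})
    ∧ ({n : Fin p → ℝ | f (n + fun _ => 2 * A) > f n}
        ⊆ {n : Fin p → ℝ | (fun _ => (1 : ℝ)) ⬝ᵥ n < -((p : ℝ) * A)} ∪
          {n : Fin p → ℝ | (fun _ => (1 : ℝ)) ⬝ᵥ (Cov⁻¹ *ᵥ n)
              < -(A * ((fun _ => (1 : ℝ)) ⬝ᵥ (Cov⁻¹ *ᵥ (fun _ => (1 : ℝ)))))}) :=
  error_region_sandwich_general p α γg ρ A hα hγg hρ hA Cov hCov f hf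
end

section
/- Let p ≥ 1 be an integer, α, γ_g, γ_s > 0, ρ ∈ (0,1), Σ ∈ ℝ^{p×p} symmetric positive definite, and A > 0. With f_M, Ω, Ω_A, Ω_B as in the sandwich set inclusion (f_M the GS density, Ω = {n : f_M(n+2A·e_p) > f_M(n)}, Ω_A = {n : e_pᵀn < −pA}, Ω_B = {n : e_pᵀΣ⁻¹n < −A·e_pᵀΣ⁻¹e_p}), the bit error probability P_e = ∫_Ω f_M(n) dn satisfies ∫_{Ω_A ∩ Ω_B} f_M(n) dn ≤ P_e ≤ ∫_{Ω_A ∪ Ω_B} f_M(n) dn. -/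
/-! Both components of `f_M` are decreasing functions of a quadratic form, the Gaussian one of
`nᵀn` and the Student one of `nᵀΣ⁻¹n`. Translating by `2A·e` changes a quadratic form `nᵀMn`
by `4A (eᵀMn + A·eᵀMe)`, so on `Ω_A ∩ Ω_B` it decreases both forms and `f_M` strictly
increases, while off `Ω_A ∪ Ω_B` it decreases neither and `f_M` cannot increase. Thus
`Ω_A ∩ Ω_B ⊆ Ω ⊆ Ω_A ∪ Ω_B`, and the integral of the nonnegative integrable `f_M` is monotone
in the domain. Integrability of the Student part comes from a coercivity bound
`c‖n‖² ≤ nᵀΣ⁻¹n`, which reduces it to that of `(1 + ‖n‖²)^(-(α+p)/2)`. -/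

open Matrix Real MeasureTheory

open Set Module

namespace Matrix

variable {ι : Type*} {M : Matrix ι ι ℝ}

theorem PosSemidef.isSymm (hM : M.PosSemidef) : M.IsSymm :=
  isHermitian_iff_isSymm.1 hM.isHermitian

variable [Fintype ι]

theorem PosSemidef.dotProduct_mulVec_self_nonneg (hM : M.PosSemidef) (x : ι → ℝ) :
    0 ≤ x ⬝ᵥ (M *ᵥ x) := by
  simpa using hM.dotProduct_mulVec_nonneg x

theorem IsSymm.dotProduct_mulVec_comm (hM : M.IsSymm) (x y : ι → ℝ) :
    x ⬝ᵥ (M *ᵥ y) = y ⬝ᵥ (M *ᵥ x) := by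
  rw [dotProduct_mulVec, ← mulVec_transpose, hM.eq, dotProduct_comm]

theorem IsSymm.dotProduct_mulVec_add_smul (hM : M.IsSymm) (x v : ι → ℝ) (t : ℝ) :
    (x + t • v) ⬝ᵥ (M *ᵥ (x + t • v))
      = x ⬝ᵥ (M *ᵥ x) + t * (2 * (v ⬝ᵥ (M *ᵥ x)) + t * (v ⬝ᵥ (M *ᵥ v))) := by
  simp only [mulVec_add, mulVec_smul, dotProduct_add, add_dotProduct, dotProduct_smul,
    smul_dotProduct, smul_eq_mul, hM.dotProduct_mulVec_comm x v]
  ring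

theorem IsSymm.dotProduct_mulVec_add_two_smul_lt_iff (hM : M.IsSymm) {A : ℝ} (hA : 0 < A)
    (x v : ι → ℝ) :
    (x + (2 * A) • v) ⬝ᵥ (M *ᵥ (x + (2 * A) • v)) < x ⬝ᵥ (M *ᵥ x)
      ↔ v ⬝ᵥ (M *ᵥ x) < -(A * (v ⬝ᵥ (M *ᵥ v))) := by
  rw [hM.dotProduct_mulVec_add_smul, add_lt_iff_neg_left]
  constructor <;> intro h <;> nlinarith

theorem PosDef.exists_mul_norm_sq_le (hM : M.PosDef) :
    ∃ c > 0, ∀ x : ι → ℝ, c * ‖x‖ ^ 2 ≤ x ⬝ᵥ (M *ᵥ x) := by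
  have hQ : Continuous fun x : ι → ℝ => x ⬝ᵥ (M *ᵥ x) := by fun_prop
  by_cases hS : (Metric.sphere (0 : ι → ℝ) 1).Nonempty
  · obtain ⟨x₀, hx₀, hmin⟩ := (isCompact_sphere 0 1).exists_isMinOn hS hQ.continuousOn
    refine ⟨_, hM.dotProduct_mulVec_pos (ne_zero_of_mem_unit_sphere ⟨x₀, hx₀⟩), fun x => ?_⟩
    rcases eq_or_ne x 0 with rfl | hx
    · simp
    have hu : ‖x‖⁻¹ • x ∈ Metric.sphere (0 : ι → ℝ) 1 := by simp [norm_smul, hx]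
    calc _ ≤ ‖x‖ ^ 2 * ((‖x‖⁻¹ • x) ⬝ᵥ (M *ᵥ (‖x‖⁻¹ • x))) := by
          rw [mul_comm]; exact mul_le_mul_of_nonneg_left (hmin hu) (by positivity)
      _ = x ⬝ᵥ (M *ᵥ x) := by
          simp only [mulVec_smul, dotProduct_smul, smul_dotProduct, smul_eq_mul]
          field_simp
  · refine ⟨1, one_pos, fun x => ?_⟩
    obtain rfl : x = 0 := by
      by_contra hx
      exact hS ⟨‖x‖⁻¹ • x, by simp [norm_smul, hx]⟩
    simp

end Matrix

theorem strictAnti_exp_neg_div {b : ℝ} (hb : 0 < b) : StrictAnti fun s : ℝ => Real.exp (-s / b) :=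
  fun _ _ h => exp_lt_exp.2 (div_lt_div_of_pos_right (neg_lt_neg h) hb)

theorem strictAntiOn_one_add_div_rpow {a r : ℝ} (ha : 0 < a) (hr : r < 0) :
    StrictAntiOn (fun s : ℝ => (1 + s / a) ^ r) (Ici 0) := fun s hs _ _ h =>
  rpow_lt_rpow_of_neg (add_pos_of_pos_of_nonneg one_pos (div_nonneg hs ha.le)) (by gcongr) hr

theorem integrable_exp_neg_dotProduct_self_div {ι : Type*} [Fintype ι] {b : ℝ} (hb : 0 < b) :
    Integrable fun x : ι → ℝ => Real.exp (-(x ⬝ᵥ x) / b) := by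
  refine (Integrable.fintype_prod (f := fun _ (t : ℝ) => Real.exp (-b⁻¹ * t ^ 2))
    fun _ => integrable_exp_neg_mul_sq (inv_pos.2 hb)).congr (.of_forall fun x => ?_)
  simp only [← exp_sum, dotProduct, ← Finset.mul_sum, sq]
  ring_nf

theorem integrable_one_add_rpow_of_coercive {E : Type*} [NormedAddCommGroup E]
    [NormedSpace ℝ E] [FiniteDimensional ℝ E] [MeasurableSpace E] [BorelSpace E]
    {μ : Measure E} [μ.IsAddHaarMeasure] {q : E → ℝ} (hq : Continuous q) {c : ℝ} (hc : 0 < c)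
    (hqc : ∀ x, c * ‖x‖ ^ 2 ≤ q x) {r : ℝ} (hr : (finrank ℝ E : ℝ) < r) :
    Integrable (fun x => (1 + q x) ^ (-r / 2)) μ := by
  have hr0 : -r / 2 ≤ 0 := by linarith [(finrank ℝ E).cast_nonneg (α := ℝ)]
  set m := min 1 c
  have hm : 0 < m := lt_min one_pos hc
  have hlow : ∀ x, m * (1 + ‖x‖ ^ 2) ≤ 1 + q x := fun x => by
    nlinarith [min_le_left 1 c, min_le_right 1 c, hqc x, sq_nonneg ‖x‖]
  refine ((integrable_rpow_neg_one_add_norm_sq hr).const_mul (m ^ (-r / 2))).mono'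
    ((hq.const_add 1).rpow_const fun x => .inl (by nlinarith [hlow x])).aestronglyMeasurable
    (.of_forall fun x => ?_)
  rw [norm_of_nonneg (rpow_nonneg (by nlinarith [hlow x]) _),
    ← mul_rpow hm.le (by positivity)]
  exact rpow_le_rpow_of_nonpos (by positivity) (hlow x) hr0

theorem Matrix.PosDef.integrable_one_add_dotProduct_mulVec_div_rpow {ι : Type*} [Fintype ι]
    {M : Matrix ι ι ℝ} (hM : M.PosDef) {a r : ℝ} (ha : 0 < a) (hr : (Fintype.card ι : ℝ) < r) :
    Integrable fun x : ι → ℝ => (1 + x ⬝ᵥ (M *ᵥ x) / a) ^ (-r / 2) := by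
  obtain ⟨c, hc, hcM⟩ := hM.exists_mul_norm_sq_le
  refine integrable_one_add_rpow_of_coercive (by fun_prop) (div_pos hc ha) (fun x => ?_)
    (by simpa using hr)
  rw [div_mul_eq_mul_div]
  exact div_le_div_of_nonneg_right (hcM x) ha.le

section ShiftComparison

variable {ι : Type*} [Fintype ι] {M₁ M₂ : Matrix ι ι ℝ} {g₁ g₂ : ℝ → ℝ}
  {f : (ι → ℝ) → ℝ} {A : ℝ}

theorem inter_subset_setOf_lt_add_smul (hM₁ : M₁.PosSemidef) (hM₂ : M₂.PosSemidef)
    (hg₁ : StrictAntiOn g₁ (Ici 0)) (hg₂ : StrictAntiOn g₂ (Ici 0))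
    (hf : ∀ x, f x = g₁ (x ⬝ᵥ (M₁ *ᵥ x)) + g₂ (x ⬝ᵥ (M₂ *ᵥ x))) (hA : 0 < A) (v : ι → ℝ) :
    {x | v ⬝ᵥ (M₁ *ᵥ x) < -(A * (v ⬝ᵥ (M₁ *ᵥ v)))} ∩
        {x | v ⬝ᵥ (M₂ *ᵥ x) < -(A * (v ⬝ᵥ (M₂ *ᵥ v)))}
      ⊆ {x | f x < f (x + (2 * A) • v)} := by
  rintro x ⟨h₁, h₂⟩
  rw [mem_ofPred_eq, hf, hf]
  exact add_lt_add
    (hg₁ (hM₁.dotProduct_mulVec_self_nonneg _) (hM₁.dotProduct_mulVec_self_nonneg _)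
      ((hM₁.isSymm.dotProduct_mulVec_add_two_smul_lt_iff hA x v).2 h₁))
    (hg₂ (hM₂.dotProduct_mulVec_self_nonneg _) (hM₂.dotProduct_mulVec_self_nonneg _)
      ((hM₂.isSymm.dotProduct_mulVec_add_two_smul_lt_iff hA x v).2 h₂))

theorem setOf_lt_add_smul_subset_union (hM₁ : M₁.PosSemidef) (hM₂ : M₂.PosSemidef)
    (hg₁ : AntitoneOn g₁ (Ici 0)) (hg₂ : AntitoneOn g₂ (Ici 0))
    (hf : ∀ x, f x = g₁ (x ⬝ᵥ (M₁ *ᵥ x)) + g₂ (x ⬝ᵥ (M₂ *ᵥ x))) (hA : 0 < A) (v : ι → ℝ) :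
    {x | f x < f (x + (2 * A) • v)}
      ⊆ {x | v ⬝ᵥ (M₁ *ᵥ x) < -(A * (v ⬝ᵥ (M₁ *ᵥ v)))} ∪
        {x | v ⬝ᵥ (M₂ *ᵥ x) < -(A * (v ⬝ᵥ (M₂ *ᵥ v)))} := by
  intro x hx
  by_contra hout
  simp only [mem_union, mem_ofPred_eq, not_or,
    ← hM₁.isSymm.dotProduct_mulVec_add_two_smul_lt_iff hA,
    ← hM₂.isSymm.dotProduct_mulVec_add_two_smul_lt_iff hA, not_lt] at hout
  rw [mem_ofPred_eq, hf, hf] at hx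
  exact hx.not_ge <| add_le_add
    (hg₁ (hM₁.dotProduct_mulVec_self_nonneg _) (hM₁.dotProduct_mulVec_self_nonneg _) hout.1)
    (hg₂ (hM₂.dotProduct_mulVec_self_nonneg _) (hM₂.dotProduct_mulVec_self_nonneg _) hout.2)

end ShiftComparison

theorem error_probability_sandwich_general (p : ℕ) (α γg ρ A : ℝ)
    (hα : 0 < α) (hγg : 0 < γg) (hρ : ρ ∈ Set.Ioo (0 : ℝ) 1) (hA : 0 < A)
    (Cov : Matrix (Fin p) (Fin p) ℝ) (hCov : Cov.PosDef)
    (f : (Fin p → ℝ) → ℝ)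
    (hf : ∀ n, f n =
        ρ * ((2 * Real.sqrt π * γg) ^ p)⁻¹ * Real.exp (-(∑ i, n i ^ 2) / (4 * γg ^ 2))
        + (1 - ρ) *
            (Real.Gamma ((α + p) / 2) /
              (Real.Gamma (α / 2) * (α * π) ^ ((p : ℝ) / 2) * Real.sqrt Cov.det)) *
            (1 + (n ⬝ᵥ (Cov⁻¹ *ᵥ n)) / α) ^ (-(α + (p : ℝ)) / 2)) :
    (∫ n in ({n : Fin p → ℝ | (fun _ => (1 : ℝ)) ⬝ᵥ n < -((p : ℝ) * A)} ∩
        {n : Fin p → ℝ | (fun _ => (1 : ℝ)) ⬝ᵥ (Cov⁻¹ *ᵥ n)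
            < -(A * ((fun _ => (1 : ℝ)) ⬝ᵥ (Cov⁻¹ *ᵥ (fun _ => (1 : ℝ)))))}), f n)
      ≤ (∫ n in {n : Fin p → ℝ | f (n + fun _ => 2 * A) > f n}, f n)
    ∧ (∫ n in {n : Fin p → ℝ | f (n + fun _ => 2 * A) > f n}, f n)
      ≤ (∫ n in ({n : Fin p → ℝ | (fun _ => (1 : ℝ)) ⬝ᵥ n < -((p : ℝ) * A)} ∪
          {n : Fin p → ℝ | (fun _ => (1 : ℝ)) ⬝ᵥ (Cov⁻¹ *ᵥ n)
              < -(A * ((fun _ => (1 : ℝ)) ⬝ᵥ (Cov⁻¹ *ᵥ (fun _ => (1 : ℝ)))))}), f n) := by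
  obtain ⟨hρ0, hρ1⟩ := hρ
  set k₁ := ρ * ((2 * Real.sqrt π * γg) ^ p)⁻¹
  set k₂ := (1 - ρ) * (Real.Gamma ((α + p) / 2) /
    (Real.Gamma (α / 2) * (α * π) ^ ((p : ℝ) / 2) * Real.sqrt Cov.det))
  set e : Fin p → ℝ := fun _ => 1
  have hk₂ : 0 < k₂ := by
    have := hCov.det_pos
    have := Gamma_pos_of_pos (s := (α + p) / 2) (by positivity)
    have := Gamma_pos_of_pos (s := α / 2) (by positivity)
    positivity
  have hr : -(α + (p : ℝ)) / 2 < 0 := by linarith [p.cast_nonneg (α := ℝ)]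
  have hg₁ : StrictAntiOn (fun s => k₁ * Real.exp (-s / (4 * γg ^ 2))) (Ici 0) :=
    ((strictAnti_exp_neg_div (by positivity)).const_mul (by positivity)).strictAntiOn _
  have hg₂ : StrictAntiOn (fun s => k₂ * (1 + s / α) ^ (-(α + (p : ℝ)) / 2)) (Ici 0) :=
    fun s hs t ht hst => mul_lt_mul_of_pos_left (strictAntiOn_one_add_div_rpow hα hr hs ht hst) hk₂
  have hfg : ∀ n, f n = k₁ * Real.exp (-(n ⬝ᵥ (1 *ᵥ n)) / (4 * γg ^ 2))
      + k₂ * (1 + (n ⬝ᵥ (Cov⁻¹ *ᵥ n)) / α) ^ (-(α + (p : ℝ)) / 2) := fun n => by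
    simp only [hf, one_mulVec, dotProduct, sq]
  have hint : Integrable f := by
    refine (((integrable_exp_neg_dotProduct_self_div (b := 4 * γg ^ 2) (by positivity)).const_mul
      k₁).add ((hCov.inv.integrable_one_add_dotProduct_mulVec_div_rpow (r := α + p) hα
        (by simpa using hα)).const_mul k₂)).congr (.of_forall fun n => ?_)
    simp [hfg]
  have hnn : 0 ≤ f := fun n => by
    have := hCov.inv.posSemidef.dotProduct_mulVec_self_nonneg n
    rw [hfg]
    positivity
  have hΩA : {n | e ⬝ᵥ n < -((p : ℝ) * A)} = {n | e ⬝ᵥ (1 *ᵥ n) < -(A * (e ⬝ᵥ (1 *ᵥ e)))} := by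
    simp [e, dotProduct, mul_comm]
  have hΩ : {n | f (n + fun _ => 2 * A) > f n} = {n | f n < f (n + (2 * A) • e)} := by
    rw [show (fun _ : Fin p => 2 * A) = (2 * A) • e by ext; simp [e]]
  rw [hΩA, hΩ]
  exact ⟨setIntegral_mono_set hint.integrableOn (.of_forall hnn) <| LE.le.eventuallyLE <|
      inter_subset_setOf_lt_add_smul .one hCov.inv.posSemidef hg₁ hg₂ hfg hA e,
    setIntegral_mono_set hint.integrableOn (.of_forall hnn) <| LE.le.eventuallyLE <|
      setOf_lt_add_smul_subset_union .one hCov.inv.posSemidef hg₁.antitoneOn hg₂.antitoneOn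
        hfg hA e⟩

/-- The BPSK bit error probability `P_e = ∫_Ω f_M` under the GS density is sandwiched between
the integrals of `f_M` over `Ω_A ∩ Ω_B` and over `Ω_A ∪ Ω_B`, where
`Ω = {n : f_M(n + 2A·e_p) > f_M(n)}`, `Ω_A = {n : e_pᵀn < −pA}` and
`Ω_B = {n : e_pᵀΣ⁻¹n < −A·e_pᵀΣ⁻¹e_p}`. -/
theorem error_probability_sandwich (p : ℕ) (hp : 1 ≤ p) (α γg γs ρ A : ℝ)
    (hα : 0 < α) (hγg : 0 < γg) (hγs : 0 < γs) (hρ : ρ ∈ Set.Ioo (0 : ℝ) 1) (hA : 0 < A)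
    (Cov : Matrix (Fin p) (Fin p) ℝ) (hCov : Cov.PosDef)
    (f : (Fin p → ℝ) → ℝ)
    (hf : ∀ n, f n =
        ρ * ((2 * Real.sqrt π * γg) ^ p)⁻¹ * Real.exp (-(∑ i, n i ^ 2) / (4 * γg ^ 2))
        + (1 - ρ) *
            (Real.Gamma ((α + p) / 2) /
              (Real.Gamma (α / 2) * (α * π) ^ ((p : ℝ) / 2) * Real.sqrt Cov.det)) *
            (1 + (n ⬝ᵥ (Cov⁻¹ *ᵥ n)) / α) ^ (-(α + (p : ℝ)) / 2)) :
    (∫ n in ({n : Fin p → ℝ | (fun _ => (1 : ℝ)) ⬝ᵥ n < -((p : ℝ) * A)} ∩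
        {n : Fin p → ℝ | (fun _ => (1 : ℝ)) ⬝ᵥ (Cov⁻¹ *ᵥ n)
            < -(A * ((fun _ => (1 : ℝ)) ⬝ᵥ (Cov⁻¹ *ᵥ (fun _ => (1 : ℝ)))))}), f n)
      ≤ (∫ n in {n : Fin p → ℝ | f (n + fun _ => 2 * A) > f n}, f n)
    ∧ (∫ n in {n : Fin p → ℝ | f (n + fun _ => 2 * A) > f n}, f n)
      ≤ (∫ n in ({n : Fin p → ℝ | (fun _ => (1 : ℝ)) ⬝ᵥ n < -((p : ℝ) * A)} ∪
          {n : Fin p → ℝ | (fun _ => (1 : ℝ)) ⬝ᵥ (Cov⁻¹ *ᵥ n)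
              < -(A * ((fun _ => (1 : ℝ)) ⬝ᵥ (Cov⁻¹ *ᵥ (fun _ => (1 : ℝ)))))}), f n) :=
  error_probability_sandwich_general p α γg ρ A hα hγg hρ hA Cov hCov f hf
end

section
/- Let α > 0 be real, p ≥ 2 an integer, and y ∈ ℝ. Then ∫₀^∞ r^{p−2}·(1 + (y² + r²)/α)^{−(α+p)/2} dr = [α^{(α+p)/2}·Γ((p+1)/2)·Γ((α+1)/2) / ((p−1)·Γ((α+p)/2))]·(α + y²)^{−(α+1)/2}. -/
open Real MeasureTheory Set ProbabilityTheory

/-! With `a = (p - 1)/2`, `b = (α + 1)/2` and `A = α + y²`, the integrand is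
`α^(a+b) r^(2a-1) (A + r²)^(-(a+b))`. The substitutions `r² = t`, `t = A u` and
`u = x/(1 - x)` reduce `∫₀^∞ r^(2a-1) (A + r²)^(-(a+b)) dr` to `A^(-b)/2` times Euler's Beta
integral `B(a, b) = Γ(a)Γ(b)/Γ(a+b)` (`ProbabilityTheory.beta`), and `Γ((p+1)/2) = a Γ(a)`
produces the factor `p - 1`. -/

theorem integral_Ioo_rpow_mul_one_sub_rpow {a b : ℝ} (ha : 0 < a) (hb : 0 < b) :
    ∫ x in Ioo (0 : ℝ) 1, x ^ (a - 1) * (1 - x) ^ (b - 1) = beta a b := by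
  have h : Complex.betaIntegral a b
      = ((∫ x in Ioo (0 : ℝ) 1, x ^ (a - 1) * (1 - x) ^ (b - 1) : ℝ) : ℂ) := by
    rw [Complex.betaIntegral, intervalIntegral.integral_of_le zero_le_one,
      integral_Ioc_eq_integral_Ioo]
    refine (setIntegral_congr_fun measurableSet_Ioo fun x ⟨hx0, hx1⟩ ↦ ?_).trans
      (integral_ofReal (f := fun x : ℝ ↦ x ^ (a - 1) * (1 - x) ^ (b - 1)))
    simp only [RCLike.ofReal_eq_complex_ofReal, Complex.ofReal_mul, Complex.ofReal_cpow hx0.le,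
      Complex.ofReal_cpow (sub_nonneg.2 hx1.le), Complex.ofReal_sub, Complex.ofReal_one]
  rw [beta_eq_betaIntegralReal a b ha hb, h, Complex.ofReal_re]

theorem image_div_one_add_Ioi : (fun t : ℝ ↦ t / (1 + t)) '' Ioi 0 = Ioo 0 1 := by
  ext x
  constructor
  · rintro ⟨t, ht : 0 < t, rfl⟩
    exact ⟨by positivity, (div_lt_one (by positivity)).2 (by linarith)⟩
  · rintro ⟨hx0, hx1⟩
    refine ⟨x / (1 - x), div_pos hx0 (sub_pos.2 hx1), ?_⟩
    field_simp [(sub_pos.2 hx1).ne']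
    ring

theorem integral_Ioi_rpow_mul_one_add_rpow_neg {a b : ℝ} (ha : 0 < a) (hb : 0 < b) :
    ∫ t in Ioi (0 : ℝ), t ^ (a - 1) * (1 + t) ^ (-(a + b)) = beta a b := by
  have hderiv : ∀ t ∈ Ioi (0 : ℝ),
      HasDerivWithinAt (fun t : ℝ ↦ t / (1 + t)) ((1 + t) ^ 2)⁻¹ (Ioi 0) t := by
    intro t (ht : 0 < t)
    have h := (hasDerivAt_id t).div ((hasDerivAt_id t).const_add 1) (by positivity)
    exact (h.congr_deriv (by simp only [id]; ring)).hasDerivWithinAt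
  have hinj : InjOn (fun t : ℝ ↦ t / (1 + t)) (Ioi 0) := by
    intro s (hs : 0 < s) t (ht : 0 < t) hst
    field_simp at hst
    linarith
  rw [← integral_Ioo_rpow_mul_one_sub_rpow ha hb, ← image_div_one_add_Ioi,
    integral_image_eq_integral_abs_deriv_smul measurableSet_Ioi hderiv hinj]
  refine setIntegral_congr_fun measurableSet_Ioi fun t (ht : 0 < t) ↦ ?_
  have ht1 : 0 < 1 + t := by linarith
  have hsub : 1 - t / (1 + t) = (1 + t)⁻¹ := by field_simp; ring
  have hdiv : (t / (1 + t)) ^ (a - 1) = t ^ (a - 1) * (1 + t) ^ (-(a - 1)) := by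
    rw [div_rpow ht.le ht1.le, rpow_neg ht1.le, div_eq_mul_inv]
  have hsq : ((1 + t) ^ 2)⁻¹ = (1 + t) ^ (-2 : ℝ) := by
    rw [rpow_neg ht1.le, rpow_two]
  rw [smul_eq_mul, abs_of_pos (by positivity), hsub, hdiv, hsq, ← rpow_neg_one,
    ← rpow_mul ht1.le, show -(a + b) = -2 + -(a - 1) + -1 * (b - 1) by ring,
    rpow_add ht1, rpow_add ht1]
  ring

theorem integral_Ioi_rpow_mul_add_rpow_neg {a b A : ℝ} (ha : 0 < a) (hb : 0 < b) (hA : 0 < A) :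
    ∫ t in Ioi (0 : ℝ), t ^ (a - 1) * (A + t) ^ (-(a + b)) = A ^ (-b) * beta a b := by
  have h := integral_comp_mul_left_Ioi' (fun t ↦ t ^ (a - 1) * (A + t) ^ (-(a + b))) 0 hA
  rw [mul_zero, smul_eq_mul] at h
  rw [← h, ← integral_Ioi_rpow_mul_one_add_rpow_neg ha hb, ← integral_const_mul,
    ← integral_const_mul]
  refine setIntegral_congr_fun measurableSet_Ioi fun t (ht : 0 < t) ↦ ?_
  rw [show A + A * t = A * (1 + t) by ring, mul_rpow hA.le ht.le,
    mul_rpow hA.le (by positivity)]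
  calc A * (A ^ (a - 1) * t ^ (a - 1) * (A ^ (-(a + b)) * (1 + t) ^ (-(a + b))))
      = A ^ (1 + (a - 1) + -(a + b)) * (t ^ (a - 1) * (1 + t) ^ (-(a + b))) := by
        rw [rpow_add hA, rpow_add hA, rpow_one]; ring
    _ = A ^ (-b) * (t ^ (a - 1) * (1 + t) ^ (-(a + b))) := by ring_nf

theorem integral_Ioi_rpow_mul_add_sq_rpow_neg {a b A : ℝ} (ha : 0 < a) (hb : 0 < b)
    (hA : 0 < A) :
    ∫ r in Ioi (0 : ℝ), r ^ (2 * a - 1) * (A + r ^ 2) ^ (-(a + b)) = A ^ (-b) * beta a b / 2 := by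
  rw [eq_div_iff two_ne_zero, ← integral_mul_const, ← integral_Ioi_rpow_mul_add_rpow_neg ha hb hA,
    ← integral_comp_rpow_Ioi_of_pos (g := fun t ↦ t ^ (a - 1) * (A + t) ^ (-(a + b))) two_pos]
  refine setIntegral_congr_fun measurableSet_Ioi fun r (hr : 0 < r) ↦ ?_
  rw [smul_eq_mul, ← rpow_mul hr.le, rpow_two, show (2 : ℝ) - 1 = 1 by norm_num, rpow_one,
    show 2 * a - 1 = 2 * (a - 1) + 1 by ring, rpow_add hr, rpow_one]
  ring

/-- The inner radial integral of the spherical change of coordinates in the half-space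
probability of the multivariate Student-t component:
`∫₀^∞ r^{p−2}(1 + (y² + r²)/α)^{−(α+p)/2} dr
  = α^{(α+p)/2}Γ((p+1)/2)Γ((α+1)/2)/((p−1)Γ((α+p)/2)) · (α + y²)^{−(α+1)/2}`. -/
theorem radial_integral_student (α : ℝ) (hα : 0 < α) (p : ℕ) (hp : 2 ≤ p) (y : ℝ) :
    (∫ r in Set.Ioi (0 : ℝ), r ^ (p - 2) * (1 + (y ^ 2 + r ^ 2) / α) ^ (-(α + (p : ℝ)) / 2))
      = α ^ ((α + (p : ℝ)) / 2) * Real.Gamma (((p : ℝ) + 1) / 2) * Real.Gamma ((α + 1) / 2)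
          / (((p : ℝ) - 1) * Real.Gamma ((α + (p : ℝ)) / 2))
        * (α + y ^ 2) ^ (-(α + 1) / 2) := by
  set a : ℝ := ((p : ℝ) - 1) / 2 with ha_def
  set b : ℝ := (α + 1) / 2 with hb_def
  have hp' : (2 : ℝ) ≤ p := by exact_mod_cast hp
  have ha : 0 < a := by rw [ha_def]; linarith
  have hs : a + b = (α + p) / 2 := by ring
  have hintegrand : ∀ r ∈ Ioi (0 : ℝ),
      r ^ (p - 2) * (1 + (y ^ 2 + r ^ 2) / α) ^ (-(α + (p : ℝ)) / 2)
        = α ^ ((α + p) / 2) * (r ^ (2 * a - 1) * (α + y ^ 2 + r ^ 2) ^ (-(a + b))) := by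
    intro r (hr : 0 < r)
    have hpow : r ^ (p - 2) = r ^ (2 * a - 1) := by
      rw [← rpow_natCast, Nat.cast_sub hp, ha_def]
      congr 1
      push_cast
      ring
    rw [hpow, hs, show 1 + (y ^ 2 + r ^ 2) / α = (α + y ^ 2 + r ^ 2) / α by field_simp; ring,
      neg_div, div_rpow (by positivity) hα.le, rpow_neg (by positivity), rpow_neg hα.le]
    field_simp
  have hGamma : Gamma (((p : ℝ) + 1) / 2) = a * Gamma a := by
    rw [← Gamma_add_one ha.ne', ha_def]
    congr 1
    ring
  rw [setIntegral_congr_fun measurableSet_Ioi hintegrand, integral_const_mul,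
    integral_Ioi_rpow_mul_add_sq_rpow_neg ha (by positivity) (by positivity), beta, hs, hGamma,
    neg_div, ← hb_def, ha_def]
  field_simp [show (p : ℝ) - 1 ≠ 0 by linarith]
end

section
/- Let f : ℝ^p → ℝ be a measurable, everywhere strictly positive probability density, let N^I and N^Q be independent ℝ^p-valued random vectors each distributed with density f, and let a, b ∈ ℝ^p. Define A = {u ∈ ℝ^p : f(u + a) > f(u)} and B = {v ∈ ℝ^p : f(v + b) > f(v)}. Then the pairwise error probability P_e = P( f(N^I + a)·f(N^Q + b) > f(N^I)·f(N^Q) ) satisfies P(A)·P(B) ≤ P_e ≤ P(A) + P(B) − P(A)·P(B), where P(A) = ∫_A f and P(B) = ∫_B f. -/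
open MeasureTheory ProbabilityTheory

/-!
If `N^I ∈ A` and `N^Q ∈ B`, both factors of the likelihood ratio grow, so the error event occurs;
if neither holds, both factors shrink (weakly) and it cannot. The error event is therefore squeezed
between `{N^I ∈ A} ∩ {N^Q ∈ B}` and `{N^I ∈ A} ∪ {N^Q ∈ B}`, whose probabilities are
`P(A) P(B)` and `P(A) + P(B) - P(A) P(B)` by independence and inclusion–exclusion.
-/

section ProductComparison

variable {α R : Type*} [Semiring R] [LinearOrder R] [IsStrictOrderedRing R]
  {g₁ g₂ h₁ h₂ : α → R}

theorem inter_setOf_lt_subset_setOf_mul_lt (hg₁ : 0 ≤ g₁) (hg₂ : 0 ≤ g₂) :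
    {x | g₁ x < h₁ x} ∩ {x | g₂ x < h₂ x} ⊆ {x | g₁ x * g₂ x < h₁ x * h₂ x} :=
  fun x ⟨hx₁, hx₂⟩ => mul_lt_mul'' hx₁ hx₂ (hg₁ x) (hg₂ x)

theorem setOf_mul_lt_subset_union_setOf_lt (hg₁ : 0 ≤ g₁) (hh₂ : 0 ≤ h₂) :
    {x | g₁ x * g₂ x < h₁ x * h₂ x} ⊆ {x | g₁ x < h₁ x} ∪ {x | g₂ x < h₂ x} := by
  intro x hx
  by_contra hx'
  simp only [Set.mem_union, Set.mem_ofPred_eq, not_or, not_lt] at hx'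
  exact hx.not_ge (mul_le_mul hx'.1 hx'.2 (hh₂ x) (hg₁ x))

end ProductComparison

theorem MeasureTheory.measure_union_eq_add_sub_inter {Ω : Type*} [MeasurableSpace Ω]
    (μ : Measure Ω) [IsFiniteMeasure μ] (s : Set Ω) {t : Set Ω} (ht : MeasurableSet t) :
    μ (s ∪ t) = μ s + μ t - μ (s ∩ t) :=
  ENNReal.eq_sub_of_add_eq (measure_ne_top μ _) (measure_union_add_inter s ht)

namespace ProbabilityTheory.IndepFun

variable {Ω β γ : Type*} [MeasurableSpace Ω] [MeasurableSpace β] [MeasurableSpace γ]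
  {μ : Measure Ω} {X : Ω → β} {Y : Ω → γ} {A : Set β} {B : Set γ} {E : Set Ω}

theorem measure_preimage_mul_le (hXY : IndepFun X Y μ) (hA : MeasurableSet A)
    (hB : MeasurableSet B) (hE : X ⁻¹' A ∩ Y ⁻¹' B ⊆ E) :
    μ (X ⁻¹' A) * μ (Y ⁻¹' B) ≤ μ E := by
  rw [← hXY.measure_inter_preimage_eq_mul A B hA hB]
  exact measure_mono hE

theorem measure_le_add_sub_mul [IsFiniteMeasure μ] (hXY : IndepFun X Y μ) (hY : Measurable Y)
    (hA : MeasurableSet A) (hB : MeasurableSet B) (hE : E ⊆ X ⁻¹' A ∪ Y ⁻¹' B) :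
    μ E ≤ μ (X ⁻¹' A) + μ (Y ⁻¹' B) - μ (X ⁻¹' A) * μ (Y ⁻¹' B) := by
  rw [← hXY.measure_inter_preimage_eq_mul A B hA hB,
    ← measure_union_eq_add_sub_inter μ _ (hY hB)]
  exact measure_mono hE

end ProbabilityTheory.IndepFun

theorem ENNReal.ofReal_add_sub_mul {x y : ℝ} (hx : 0 ≤ x) (hy : 0 ≤ y) :
    ENNReal.ofReal (x + y - x * y)
      = ENNReal.ofReal x + ENNReal.ofReal y - ENNReal.ofReal x * ENNReal.ofReal y := by
  rw [ENNReal.ofReal_sub _ (mul_nonneg hx hy), ENNReal.ofReal_add hx hy, ENNReal.ofReal_mul hx]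

theorem pairwise_error_probability_bounds_general (p : ℕ)
    (f : (Fin p → ℝ) → ℝ) (hmeas : Measurable f) (hpos : ∀ x, 0 < f x)
    {Ω : Type*} [MeasureSpace Ω] [IsProbabilityMeasure (volume : Measure Ω)]
    (X Y : Ω → (Fin p → ℝ)) (hmY : Measurable Y)
    (hindep : ProbabilityTheory.IndepFun X Y)
    (hX : ∀ s : Set (Fin p → ℝ), MeasurableSet s →
        volume (X ⁻¹' s) = ENNReal.ofReal (∫ x in s, f x))
    (hY : ∀ s : Set (Fin p → ℝ), MeasurableSet s →
        volume (Y ⁻¹' s) = ENNReal.ofReal (∫ x in s, f x))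
    (a b : Fin p → ℝ) :
    ENNReal.ofReal ((∫ x in {u : Fin p → ℝ | f (u + a) > f u}, f x) *
        (∫ x in {v : Fin p → ℝ | f (v + b) > f v}, f x))
      ≤ volume {ω : Ω | f (X ω + a) * f (Y ω + b) > f (X ω) * f (Y ω)}
    ∧ volume {ω : Ω | f (X ω + a) * f (Y ω + b) > f (X ω) * f (Y ω)}
      ≤ ENNReal.ofReal ((∫ x in {u : Fin p → ℝ | f (u + a) > f u}, f x)
          + (∫ x in {v : Fin p → ℝ | f (v + b) > f v}, f x)
          - (∫ x in {u : Fin p → ℝ | f (u + a) > f u}, f x) *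
              (∫ x in {v : Fin p → ℝ | f (v + b) > f v}, f x)) := by
  set A := {u : Fin p → ℝ | f (u + a) > f u}
  set B := {v : Fin p → ℝ | f (v + b) > f v}
  have hA : MeasurableSet A := measurableSet_lt hmeas (hmeas.comp (measurable_add_const a))
  have hB : MeasurableSet B := measurableSet_lt hmeas (hmeas.comp (measurable_add_const b))
  have hf : 0 ≤ f := fun x => (hpos x).le
  have hPA : 0 ≤ ∫ x in A, f x := setIntegral_nonneg hA fun x _ => hf x
  have hPB : 0 ≤ ∫ x in B, f x := setIntegral_nonneg hB fun x _ => hf x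
  rw [ENNReal.ofReal_mul hPA, ENNReal.ofReal_add_sub_mul hPA hPB, ← hX A hA, ← hY B hB]
  exact ⟨hindep.measure_preimage_mul_le hA hB
      (inter_setOf_lt_subset_setOf_mul_lt (fun ω => hf (X ω)) (fun ω => hf (Y ω))),
    hindep.measure_le_add_sub_mul hmY hA hB
      (setOf_mul_lt_subset_union_setOf_lt (fun ω => hf (X ω)) (fun ω => hf (Y ω + b)))⟩

/-- Pairwise error probability bounds: if `N^I, N^Q` are independent random vectors with a
common strictly positive density `f`, `A = {u : f(u+a) > f(u)}` and `B = {v : f(v+b) > f(v)}`,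
then `P(A)·P(B) ≤ P(f(N^I+a)f(N^Q+b) > f(N^I)f(N^Q)) ≤ P(A) + P(B) − P(A)·P(B)`. -/
theorem pairwise_error_probability_bounds (p : ℕ)
    (f : (Fin p → ℝ) → ℝ) (hmeas : Measurable f) (hpos : ∀ x, 0 < f x)
    (hprob : ∫ x, f x = 1)
    {Ω : Type*} [MeasureSpace Ω] [IsProbabilityMeasure (volume : Measure Ω)]
    (X Y : Ω → (Fin p → ℝ)) (hmX : Measurable X) (hmY : Measurable Y)
    (hindep : ProbabilityTheory.IndepFun X Y)
    (hX : ∀ s : Set (Fin p → ℝ), MeasurableSet s →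
        volume (X ⁻¹' s) = ENNReal.ofReal (∫ x in s, f x))
    (hY : ∀ s : Set (Fin p → ℝ), MeasurableSet s →
        volume (Y ⁻¹' s) = ENNReal.ofReal (∫ x in s, f x))
    (a b : Fin p → ℝ) :
    ENNReal.ofReal ((∫ x in {u : Fin p → ℝ | f (u + a) > f u}, f x) *
        (∫ x in {v : Fin p → ℝ | f (v + b) > f v}, f x))
      ≤ volume {ω : Ω | f (X ω + a) * f (Y ω + b) > f (X ω) * f (Y ω)}
    ∧ volume {ω : Ω | f (X ω + a) * f (Y ω + b) > f (X ω) * f (Y ω)}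
      ≤ ENNReal.ofReal ((∫ x in {u : Fin p → ℝ | f (u + a) > f u}, f x)
          + (∫ x in {v : Fin p → ℝ | f (v + b) > f v}, f x)
          - (∫ x in {u : Fin p → ℝ | f (u + a) > f u}, f x) *
              (∫ x in {v : Fin p → ℝ | f (v + b) > f v}, f x)) :=
  pairwise_error_probability_bounds_general p f hmeas hpos X Y hmY hindep hX hY a b
end
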